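/- arXiv:1812.09739 — 2 statements merged into one kernel-verified Lean document; each statement's English description precedes it below -/
import Mathlib

section
/- Let i ≥ 0 and let a ∈ A = 𝔽_q[θ] satisfy deg a ≤ i. Then for every 0 ≤ j ≤ i, the identity ∂_θ^j(a) = Σ_{ℓ=0}^{i} κ_{ijℓ}(t−θ, t^q−θ, …, t^{q^i}−θ) · a(t)^{q^ℓ} holds in the rational function field 𝔽_q(θ,t), where κ_{ijℓ}(x_0,…,x_i) = (−1)^{i−j} · e_{i,i−j}(x_0,…,x̂_ℓ,…,x_i) / Π_{m≠ℓ}(x_ℓ − x_m) (x̂_ℓ omitted), and a(t) ∈ 𝔽_q[t] denotes a with θ replaced by t. (The denominators Π_{m≠ℓ}(t^{q^ℓ} − t^{q^m}) are nonzero in 𝔽_q(θ,t).) -/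
/-!
Since `a` has coefficients in `𝔽_q`, Frobenius and Taylor expansion at `θ` give
`a(t)^{q^ℓ} = a(t^{q^ℓ}) = Σ_k ∂_θ^k(a) · (t^{q^ℓ} − θ)^k`. So the polynomial
`P = Σ_k ∂_θ^k(a) X^k`, of degree `≤ i`, takes the value `a(t)^{q^ℓ}` at each of the `i + 1`
distinct nodes `x_ℓ = t^{q^ℓ} − θ`. Lagrange interpolation recovers the coefficients of `P` from
these values, and by Vieta `κ_{ijℓ}` is the coefficient of `X^j` in the Lagrange basis polynomial
of the node `x_ℓ`.
-/

open Polynomial Finset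

noncomputable section

/-- Elementary symmetric polynomial of degree `j` in the family `v` indexed by the finite set `s`. -/
def esymF {R : Type*} [CommRing R] {α : Type*} [DecidableEq α] (s : Finset α) (v : α → R) (j : ℕ) : R :=
  ∑ S ∈ s.powersetCard j, ∏ m ∈ S, v m

variable (F : Type*) [Field F] [Fintype F]

local notation "q" => Fintype.card F

/-- The rational function field `𝔽_q(θ,t)`, realized as `RatFunc (RatFunc F)` with inner
variable `θ` and outer variable `t`. -/
local notation "Kθt" => RatFunc (RatFunc F)

/-- `t ∈ 𝔽_q(θ,t)`. -/
def tK : RatFunc (RatFunc F) := RatFunc.X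

/-- `θ ∈ 𝔽_q(θ,t)`. -/
def θK : RatFunc (RatFunc F) := RatFunc.C RatFunc.X

/-- The embedding `A = 𝔽_q[θ] → 𝔽_q(θ,t)`, `θ ↦ θ`. -/
def embA : Polynomial F →+* RatFunc (RatFunc F) :=
  (RatFunc.C : RatFunc F →+* RatFunc (RatFunc F)).comp (algebraMap (Polynomial F) (RatFunc F))

/-- `a(t) ∈ 𝔽_q(θ,t)`: the polynomial `a` with `θ` replaced by `t`. -/
def aT (a : Polynomial F) : RatFunc (RatFunc F) :=
  Polynomial.eval₂
    ((RatFunc.C : RatFunc F →+* RatFunc (RatFunc F)).comp (RatFunc.C : F →+* RatFunc F))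
    RatFunc.X a

theorem Finset.prod_X_sub_C_coeff {R ι : Type*} [CommRing R] [DecidableEq ι] (s : Finset ι)
    (v : ι → R) {k : ℕ} (h : k ≤ #s) :
    (∏ m ∈ s, (X - C (v m))).coeff k = (-1) ^ (#s - k) * esymF s v (#s - k) := by
  have := Multiset.prod_X_sub_C_coeff (s.val.map v) (k := k) (by simpa using h)
  rw [Multiset.map_map, Multiset.card_map, Function.comp_def] at this
  rw [Finset.prod, this, Finset.esymm_map_val]
  rfl

/-- The paper's `κ_{njℓ}(x_0, …, x_n)`. -/
def lagrangeCoeff {K : Type*} [Field K] {n : ℕ} (x : Fin (n + 1) → K) (j : ℕ)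
    (ℓ : Fin (n + 1)) : K :=
  (-1) ^ (n - j) * esymF (univ.erase ℓ) x (n - j) / ∏ m ∈ univ.erase ℓ, (x ℓ - x m)

theorem Lagrange.coeff_basis_univ {K : Type*} [Field K] {n : ℕ} (x : Fin (n + 1) → K)
    {j : ℕ} (hj : j ≤ n) (ℓ : Fin (n + 1)) :
    (Lagrange.basis univ x ℓ).coeff j = lagrangeCoeff x j ℓ := by
  have hcard : #(univ.erase ℓ) = n := by simp
  rw [Lagrange.basis]
  simp only [Lagrange.basisDivisor]
  rw [prod_mul_distrib, ← map_prod, coeff_C_mul, prod_X_sub_C_coeff _ _ (hcard.symm ▸ hj), hcard,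
    prod_inv_distrib, lagrangeCoeff, div_eq_inv_mul]

theorem coeff_eq_sum_lagrangeCoeff_mul_eval {K : Type*} [Field K] {n : ℕ}
    {x : Fin (n + 1) → K} (hx : Function.Injective x) {P : K[X]} (hP : P.natDegree ≤ n)
    {j : ℕ} (hj : j ≤ n) :
    P.coeff j = ∑ ℓ, lagrangeCoeff x j ℓ * P.eval (x ℓ) := by
  have hdeg : P.degree < #(univ : Finset (Fin (n + 1))) := by
    rw [card_univ, Fintype.card_fin]
    exact (degree_le_of_natDegree_le hP).trans_lt (by exact_mod_cast n.lt_succ_self)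
  conv_lhs => rw [Lagrange.eq_interpolate hx.injOn hdeg]
  rw [Lagrange.interpolate_apply, finsetSum_coeff]
  refine sum_congr rfl fun ℓ _ => ?_
  rw [coeff_C_mul, Lagrange.coeff_basis_univ x hj, mul_comm]

theorem Polynomial.hasseDeriv_map {R S : Type*} [CommRing R] [CommRing S] (c : R →+* S) (k : ℕ)
    (a : R[X]) : hasseDeriv k (a.map c) = (hasseDeriv k a).map c := by
  ext n
  simp [hasseDeriv_coeff, coeff_map]

theorem FiniteField.expand_card_pow {K : Type*} [Field K] [Fintype K] (f : K[X]) (n : ℕ) :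
    expand K (Fintype.card K ^ n) f = f ^ Fintype.card K ^ n := by
  induction n with
  | zero => simp
  | succ n ih => rw [pow_succ, expand_mul, expand_card, map_pow, ih, ← pow_mul]

theorem FiniteField.eval₂_pow_card_pow {K L : Type*} [Field K] [Fintype K] [CommRing L]
    (c : K →+* L) (f : K[X]) (r : L) (n : ℕ) :
    f.eval₂ c r ^ Fintype.card K ^ n = f.eval₂ c (r ^ Fintype.card K ^ n) := by
  rw [← eval₂_pow, ← expand_card_pow, eval₂_eq_eval_map, map_expand, expand_eval,
    eval₂_eq_eval_map]

theorem RatFunc.X_pow_injective {K : Type*} [Field K] :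
    Function.Injective fun n : ℕ => (X : RatFunc K) ^ n := by
  intro m n h
  have : (Polynomial.X ^ m : K[X]) = Polynomial.X ^ n := by
    apply RatFunc.algebraMap_injective K
    simp only [map_pow, RatFunc.algebraMap_X]
    exact h
  simpa using congrArg natDegree this

theorem embA_eq_eval₂ (K : Type*) [Field K] (b : K[X]) :
    embA K b = b.eval₂ (RatFunc.C.comp RatFunc.C) (θK K) := by
  have : embA K = eval₂RingHom (RatFunc.C.comp RatFunc.C) (θK K) := by
    apply Polynomial.ringHom_ext
    · intro s
      simp [embA, RatFunc.algebraMap_C]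
    · simp [embA, θK, RatFunc.algebraMap_X]
  rw [this, coe_eval₂RingHom]

/-- Let `i ≥ 0` and `a ∈ A = 𝔽_q[θ]` with `deg a ≤ i`.  For every `0 ≤ j ≤ i`,
`∂_θ^j(a) = Σ_{ℓ=0}^{i} κ_{ijℓ}(t−θ, t^q−θ, …, t^{q^i}−θ) · a(t)^{q^ℓ}` in `𝔽_q(θ,t)`, where
`κ_{ijℓ}(x_0,…,x_i) = (−1)^{i−j} e_{i,i−j}(x_0,…,x̂_ℓ,…,x_i) / Π_{m≠ℓ}(x_ℓ − x_m)` (`x̂_ℓ`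
omitted) and `∂_θ^j` is the `j`-th hyperderivative (Hasse derivative). -/
theorem stmt7 (i : ℕ) (a : Polynomial F) (ha : a.natDegree ≤ i) (j : ℕ) (hj : j ≤ i) :
    embA F (hasseDeriv j a)
      = ∑ ℓ : Fin (i + 1),
          ((-1 : Kθt) ^ (i - j)
              * esymF ((univ : Finset (Fin (i + 1))).erase ℓ)
                  (fun n => tK F ^ q ^ (n : ℕ) - θK F) (i - j)
              / ∏ m ∈ (univ : Finset (Fin (i + 1))).erase ℓ,
                  ((tK F ^ q ^ (ℓ : ℕ) - θK F) - (tK F ^ q ^ (m : ℕ) - θK F)))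
            * aT F a ^ q ^ (ℓ : ℕ) := by
  set x : Fin (i + 1) → Kθt := fun n => tK F ^ q ^ (n : ℕ) - θK F
  have hx : Function.Injective x := sub_left_injective.comp <| RatFunc.X_pow_injective.comp <|
    (Nat.pow_right_injective Fintype.one_lt_card).comp Fin.val_injective
  set P := taylor (θK F) (a.map (RatFunc.C.comp RatFunc.C))
  have hP : P.natDegree ≤ i := by
    rw [natDegree_taylor]
    exact natDegree_map_le.trans ha
  have hcoeff : embA F (hasseDeriv j a) = P.coeff j := by
    rw [taylor_coeff, embA_eq_eval₂, eval₂_eq_eval_map, hasseDeriv_map]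
  have heval (ℓ : Fin (i + 1)) : P.eval (x ℓ) = aT F a ^ q ^ (ℓ : ℕ) := by
    rw [taylor_eval, sub_add_cancel, aT, FiniteField.eval₂_pow_card_pow, eval₂_eq_eval_map]
    rfl
  rw [hcoeff, coeff_eq_sum_lagrangeCoeff_mul_eval hx hP hj]
  simp only [heval]
  rfl

end
end

section
/- Let d ≥ 1 and let T, x_1,…,x_d be independent variables. Then for every k ≥ 0, the identity h_{d,k}(T−x_1, …, T−x_d) = Σ_{j=0}^{k} (−1)^{j} · binom(d+k−1, k−j) · h_{d,j}(x_1,…,x_d) · T^{k−j} holds in the polynomial ring ℤ[x_1,…,x_d,T]. -/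
/-!
Write `T - x_i = T + (-1) · x_i`. Since `h_j` is homogeneous of degree `j`, it suffices to
expand `h_k(T + v_1, …, T + v_n)` for an arbitrary finite family `v`:
`h_k(T + v) = ∑_{i + j = k} multichoose (n + j) i · h_j(v) · T^i`,
and `multichoose (d + j) (k - j) = binom(d + k - 1, k - j)`. The expansion follows by induction on
the index set and on `k` from the recurrence `h_{k+1}(s ∪ {a}) = h_{k+1}(s) + v_a · h_k(s ∪ {a})`,
with Pascal's rule for `multichoose` matching the coefficients.
-/

open Polynomial Finset

noncomputable section

/-- Complete homogeneous symmetric polynomial of degree `j` in the family `v` indexed by the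
finite set `s`: the sum of all monomials of total degree `j` in the values of `v`. -/
def hsymF {R : Type*} [CommRing R] {α : Type*} [DecidableEq α] (s : Finset α) (v : α → R) (j : ℕ) : R :=
  ∑ m ∈ s.sym j, ((m : Multiset α).map v).prod

section hsymF

variable {R α : Type*} [CommRing R] [DecidableEq α]

lemma hsymF_zero (s : Finset α) (v : α → R) : hsymF s v 0 = 1 := by
  rw [hsymF, sym_zero, sum_singleton]
  exact Multiset.prod_zero

lemma hsymF_empty_succ (v : α → R) (n : ℕ) : hsymF ∅ v (n + 1) = 0 := by
  simp [hsymF]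

lemma hsymF_const_mul (s : Finset α) (c : R) (v : α → R) (n : ℕ) :
    hsymF s (fun i => c * v i) n = c ^ n * hsymF s v n := by
  simp [hsymF, mul_sum, Multiset.prod_map_mul]

lemma hsymF_insert {a : α} {s : Finset α} (ha : a ∉ s) (v : α → R) (n : ℕ) :
    hsymF (insert a s) v n = ∑ i : Fin (n + 1), v a ^ (i : ℕ) * hsymF s v (n - i) := by
  rw [hsymF, ← sum_coe_sort, ← (symInsertEquiv ha).symm.sum_comp, Fintype.sum_sigma]
  refine Fintype.sum_congr _ _ fun i => ?_
  rw [hsymF, mul_sum, ← sum_coe_sort (s.sym (n - i))]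
  apply Fintype.sum_congr
  intro m
  simp [Sym.coe_fill, Sym.coe_replicate, mul_comm]

lemma hsymF_insert_succ {a : α} {s : Finset α} (ha : a ∉ s) (v : α → R) (n : ℕ) :
    hsymF (insert a s) v (n + 1) = hsymF s v (n + 1) + v a * hsymF (insert a s) v n := by
  rw [hsymF_insert ha, hsymF_insert ha, Fin.sum_univ_succ, mul_sum]
  simp [pow_succ', mul_assoc]

end hsymF

section multichoose

variable {R : Type*} [CommRing R]

lemma sum_antidiagonal_multichoose_succ (T : R) (H : ℕ → R) (n k : ℕ) :
    ∑ p ∈ antidiagonal (k + 1), (Nat.multichoose (n + 1 + p.1) p.2 : R) * H p.1 * T ^ p.2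
      = ∑ p ∈ antidiagonal (k + 1), (Nat.multichoose (n + p.1) p.2 : R) * H p.1 * T ^ p.2
        + T * ∑ p ∈ antidiagonal k, (Nat.multichoose (n + 1 + p.1) p.2 : R) * H p.1 * T ^ p.2 := by
  have pascal : ∀ p ∈ antidiagonal k,
      (Nat.multichoose (n + 1 + p.1) (p.2 + 1) : R) * H p.1 * T ^ (p.2 + 1)
        = (Nat.multichoose (n + p.1) (p.2 + 1) : R) * H p.1 * T ^ (p.2 + 1)
          + T * ((Nat.multichoose (n + 1 + p.1) p.2 : R) * H p.1 * T ^ p.2) := by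
    intro p _
    rw [add_right_comm, Nat.multichoose_succ_succ]
    push_cast
    ring
  rw [Nat.sum_antidiagonal_succ', Nat.sum_antidiagonal_succ', sum_congr rfl pascal,
    sum_add_distrib, mul_sum]
  simp only [Nat.multichoose_zero_right]
  ring

lemma sum_antidiagonal_multichoose_of_recurrence (T c : R) (H H' : ℕ → R) (h0 : H' 0 = H 0)
    (hsucc : ∀ j, H' (j + 1) = H (j + 1) + c * H' j) (n k : ℕ) :
    ∑ p ∈ antidiagonal (k + 1), (Nat.multichoose (n + p.1) p.2 : R) * H' p.1 * T ^ p.2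
      = ∑ p ∈ antidiagonal (k + 1), (Nat.multichoose (n + p.1) p.2 : R) * H p.1 * T ^ p.2
        + c * ∑ p ∈ antidiagonal k, (Nat.multichoose (n + 1 + p.1) p.2 : R) * H' p.1 * T ^ p.2 := by
  have shift : ∀ p ∈ antidiagonal k,
      (Nat.multichoose (n + (p.1 + 1)) p.2 : R) * H' (p.1 + 1) * T ^ p.2
        = (Nat.multichoose (n + (p.1 + 1)) p.2 : R) * H (p.1 + 1) * T ^ p.2
          + c * ((Nat.multichoose (n + 1 + p.1) p.2 : R) * H' p.1 * T ^ p.2) := by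
    intro p _
    rw [hsucc, ← add_assoc, add_right_comm n]
    ring
  rw [Nat.sum_antidiagonal_succ, Nat.sum_antidiagonal_succ, sum_congr rfl shift,
    sum_add_distrib, mul_sum, h0]
  ring

end multichoose

theorem hsymF_const_add {R α : Type*} [CommRing R] [DecidableEq α] (T : R) (v : α → R)
    (s : Finset α) (k : ℕ) :
    hsymF s (fun i => T + v i) k
      = ∑ p ∈ antidiagonal k, (Nat.multichoose (#s + p.1) p.2 : R) * hsymF s v p.1 * T ^ p.2 := by
  induction s using Finset.induction_on generalizing k with
  | empty =>
    cases k with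
    | zero => simp [hsymF_zero]
    | succ k => simp [hsymF_empty_succ, Nat.sum_antidiagonal_succ]
  | insert a s ha ih =>
    induction k with
    | zero => simp [hsymF_zero]
    | succ k ihk =>
      rw [hsymF_insert_succ ha, ih, ihk, card_insert_of_notMem ha,
        sum_antidiagonal_multichoose_succ,
        sum_antidiagonal_multichoose_of_recurrence T (v a) (hsymF s v) (hsymF (insert a s) v)
          (by rw [hsymF_zero, hsymF_zero]) (hsymF_insert_succ ha v)]
      ring

/-- Stated for arbitrary elements of a commutative ring, which is equivalent to the identity in
`ℤ[x_1,…,x_d,T]`. -/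
theorem stmt14_general {R : Type*} [CommRing R] (d : ℕ) (k : ℕ) (T : R) (x : ℕ → R) :
    hsymF (Icc 1 d) (fun m => T - x m) k
      = ∑ j ∈ range (k + 1),
          (-1 : R) ^ j * ((d + k - 1).choose (k - j) : R) * hsymF (Icc 1 d) x j * T ^ (k - j) := by
  simp_rw [sub_eq_add_neg, ← neg_one_mul (x _)]
  rw [hsymF_const_add, Nat.sum_antidiagonal_eq_sum_range_succ_mk, Nat.card_Icc,
    add_tsub_cancel_right]
  refine sum_congr rfl fun j hj => ?_
  have hjk : j ≤ k := Nat.lt_succ_iff.mp (mem_range.mp hj)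
  rw [hsymF_const_mul, Nat.multichoose_eq, show d + j + (k - j) - 1 = d + k - 1 by omega]
  ring

/-- For `d ≥ 1` and `k ≥ 0`,
`h_{d,k}(T−x_1,…,T−x_d) = Σ_{j=0}^{k} (−1)^j · binom(d+k−1,k−j) · h_{d,j}(x_1,…,x_d) · T^{k−j}`.
(Stated for arbitrary elements `T, x_1,…,x_d` of an arbitrary commutative ring, which is
equivalent to the identity in `ℤ[x_1,…,x_d,T]`; `x n` denotes `x_n`.) -/
theorem stmt14 {R : Type*} [CommRing R] (d : ℕ) (hd : 1 ≤ d) (k : ℕ) (T : R) (x : ℕ → R) :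
    hsymF (Icc 1 d) (fun m => T - x m) k
      = ∑ j ∈ range (k + 1),
          (-1 : R) ^ j * ((d + k - 1).choose (k - j) : R) * hsymF (Icc 1 d) x j * T ^ (k - j) :=
  stmt14_general d k T x

end
end
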